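/- arXiv:1602.03140 — 4 statements merged into one kernel-verified Lean document; each statement's English description precedes it below -/
import Mathlib

section
/- Let n ∈ ℕ, let 𝒫₁,…,𝒫ₙ be sets of primes, and let f₁,…,fₙ : ℕ → ℝ be multiplicative functions satisfying: (1) fᵢ is multiplicative; (2) fᵢ takes values in ℝ_{>0}; (3) fᵢ(p^m) = fᵢ(p) for every prime p and every m ∈ ℕ; (4) fᵢ(p) < 1 for p ∈ 𝒫ᵢ; (5) fᵢ(p) = 1 for p ∉ 𝒫ᵢ. Define multiplicative functions f̂ᵢ : ℕ → ℝ by f̂ᵢ(k) = ∏_{p∣k}(1 − fᵢ(p)). Then for every k ∈ ℕⁿ with gcd(kᵢ,k_j) = 1 for all i ≠ j, one has Σ* λ⁻_{d₁⋯dₙ} ∏ᵢ f̂ᵢ(dᵢ) ≤ ∏ᵢ fᵢ(kᵢ) ≤ Σ* λ⁺_{d₁⋯dₙ} ∏ᵢ f̂ᵢ(dᵢ), where Σ* denotes the sum over n-tuples (d₁,…,dₙ) of squarefree positive integers with dᵢ ∣ kᵢ and every prime factor of dᵢ lying in 𝒫ᵢ. -/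
/-!
Let `g(p) = fᵢ(p)` for the primes `p ∈ 𝒫ᵢ` dividing `kᵢ`; these sets of primes are disjoint by
coprimality, and over their union `P` we get `∏ᵢ fᵢ(kᵢ) = ∏_{p ∈ P} g(p)`, while the neutralised
sums become `∑_{T ⊆ P} λ(∏ T) ∏_{p ∈ T} (1 - g(p))`. Expanding `1 = ∏_{p ∈ P} ((1 - g(p)) + g(p))`
rewrites such a sum as `∑_{S ⊆ P} w(S) ∑_{d ∣ ∏ S} λ_d` with weights
`w(S) = ∏_{p ∈ S} (1 - g(p)) ∏_{p ∈ P \ S} g(p) ≥ 0`. The term `S = ∅` is `∏_{p ∈ P} g(p)`, and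
every other term has the sign of the sieve condition.
-/

open scoped Classical

open Finset Function

section Powerset

variable {α R : Type*} [DecidableEq α] [CommSemiring R]

theorem Finset.sum_powerset_filter_superset_prod_mul_prod_sdiff (a b : α → R) {P T : Finset α}
    (hT : T ⊆ P) :
    ∑ S ∈ P.powerset with T ⊆ S, (∏ p ∈ S, a p) * ∏ p ∈ P \ S, b p
      = (∏ p ∈ T, a p) * ∏ p ∈ P \ T, (a p + b p) := by
  -- expand `∏ (a + b')` with `b'` vanishing on `T`: only the supersets of `T` survive
  set b' : α → R := fun p => if p ∈ T then 0 else b p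
  have hb' (S : Finset α) : ∏ p ∈ P \ S, b' p = if T ⊆ S then ∏ p ∈ P \ S, b p else 0 := by
    split_ifs with hTS
    · exact prod_congr rfl fun p hp => if_neg fun hpT => (mem_sdiff.mp hp).2 (hTS hpT)
    · obtain ⟨p, hpT, hpS⟩ := not_subset.mp hTS
      exact prod_eq_zero (mem_sdiff.mpr ⟨hT hpT, hpS⟩) (if_pos hpT)
  calc ∑ S ∈ P.powerset with T ⊆ S, (∏ p ∈ S, a p) * ∏ p ∈ P \ S, b p
      = ∏ p ∈ P, (a p + b' p) := by
        simp_rw [prod_add, hb', mul_ite, mul_zero, sum_ite, sum_const_zero, add_zero]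
    _ = (∏ p ∈ T, a p) * ∏ p ∈ P \ T, (a p + b p) := by
        rw [← prod_sdiff hT, mul_comm]
        congr 1
        · exact prod_congr rfl fun p hp => by simp [b', hp]
        · exact prod_congr rfl fun p hp => by simp [b', (mem_sdiff.mp hp).2]

theorem Finset.sum_powerset_prod_mul_prod_sdiff_mul_sum_powerset (a b : α → R)
    (P : Finset α) (L : Finset α → R) :
    ∑ S ∈ P.powerset, (∏ p ∈ S, a p) * (∏ p ∈ P \ S, b p) * ∑ T ∈ S.powerset, L T
      = ∑ T ∈ P.powerset, L T * ((∏ p ∈ T, a p) * ∏ p ∈ P \ T, (a p + b p)) := by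
  simp_rw [mul_sum]
  rw [sum_comm' (t' := P.powerset) (s' := fun T => {S ∈ P.powerset | T ⊆ S})]
  · refine sum_congr rfl fun T hT => ?_
    rw [← sum_powerset_filter_superset_prod_mul_prod_sdiff a b (mem_powerset.mp hT), mul_sum]
    exact sum_congr rfl fun S _ => mul_comm _ _
  · intro S T
    simp only [mem_powerset, mem_filter]
    exact ⟨fun ⟨hS, hT⟩ => ⟨⟨hS, hT⟩, hT.trans hS⟩, fun ⟨⟨hS, hT⟩, _⟩ => ⟨hS, hT⟩⟩

theorem Finset.mul_prod_le_sum_powerset_mul_prod_one_sub (L : Finset α → ℝ) (g : α → ℝ)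
    {P : Finset α} (hg0 : ∀ p ∈ P, 0 ≤ g p) (hg1 : ∀ p ∈ P, g p ≤ 1)
    (hL : ∀ S ⊆ P, S.Nonempty → 0 ≤ ∑ T ∈ S.powerset, L T) :
    L ∅ * ∏ p ∈ P, g p ≤ ∑ T ∈ P.powerset, L T * ∏ p ∈ T, (1 - g p) := by
  have hid := sum_powerset_prod_mul_prod_sdiff_mul_sum_powerset (fun p => 1 - g p) g P L
  simp only [sub_add_cancel, prod_const_one, mul_one] at hid
  rw [← hid, ← add_sum_erase _ _ (empty_mem_powerset P)]
  refine le_of_eq_of_le (by simp [mul_comm]) (le_add_of_nonneg_right (sum_nonneg fun S hS => ?_))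
  obtain ⟨hSne, hSP⟩ := mem_erase.mp hS
  rw [mem_powerset] at hSP
  refine mul_nonneg (mul_nonneg ?_ ?_) (hL S hSP (nonempty_iff_ne_empty.mpr hSne))
  · exact prod_nonneg fun p hp => sub_nonneg.mpr (hg1 p (hSP hp))
  · exact prod_nonneg fun p hp => hg0 p (mem_sdiff.mp hp).1

end Powerset

theorem Nat.squarefree_prod_of_prime {S : Finset ℕ} (hS : ∀ p ∈ S, p.Prime) :
    Squarefree (∏ p ∈ S, p) :=
  squarefree_prod_of_pairwise_isCoprime
    (fun p hp q hq hpq => Nat.coprime_iff_isRelPrime.mp <|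
      (Nat.coprime_primes (hS p hp) (hS q hq)).mpr hpq)
    fun p hp => (hS p hp).squarefree

theorem Nat.sum_divisors_eq_sum_powerset_primeFactors {β : Type*} [AddCommMonoid β] {N : ℕ}
    (hN : Squarefree N) (F : ℕ → β) :
    ∑ d ∈ N.divisors, F d = ∑ T ∈ N.primeFactors.powerset, F (∏ p ∈ T, p) := by
  refine sum_nbij' primeFactors (fun T => ∏ p ∈ T, p) (fun d hd => ?_) (fun T hT => ?_)
    (fun d hd => ?_) (fun T hT => ?_) (fun d hd => ?_)
  · exact mem_powerset.mpr (primeFactors_mono (dvd_of_mem_divisors hd) hN.ne_zero)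
  · refine mem_divisors.mpr ⟨?_, hN.ne_zero⟩
    exact (prod_dvd_prod_of_subset _ _ _ (mem_powerset.mp hT)).trans
      (prod_primeFactors_of_squarefree hN).dvd
  · exact prod_primeFactors_of_squarefree (hN.squarefree_of_dvd (dvd_of_mem_divisors hd))
  · exact primeFactors_prod fun p hp => prime_of_mem_primeFactors (mem_powerset.mp hT hp)
  · rw [prod_primeFactors_of_squarefree (hN.squarefree_of_dvd (dvd_of_mem_divisors hd))]

theorem Nat.apply_eq_prod_primeFactors {β : Type*} [CommMonoid β] (f : ℕ → β) (hone : f 1 = 1)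
    (hmul : ∀ a b, 0 < a → 0 < b → Nat.Coprime a b → f (a * b) = f a * f b)
    (hpp : ∀ p m : ℕ, p.Prime → 1 ≤ m → f (p ^ m) = f p) {k : ℕ} (hk : k ≠ 0) :
    f k = ∏ p ∈ k.primeFactors, f p := by
  have hmul' (a b : ℕ) (hab : Nat.Coprime a b) : f (a * b) = f a * f b := by
    rcases Nat.eq_zero_or_pos a with rfl | ha
    · simp [(Nat.coprime_zero_left _).mp hab, hone]
    rcases Nat.eq_zero_or_pos b with rfl | hb
    · simp [(Nat.coprime_zero_right _).mp hab, hone]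
    exact hmul a b ha hb hab
  rw [Nat.multiplicative_factorization f hmul' hone hk, Finsupp.prod, Nat.support_factorization]
  refine prod_congr rfl fun p hp => hpp p _ (Nat.prime_of_mem_primeFactors hp) ?_
  exact (Nat.prime_of_mem_primeFactors hp).factorization_pos_of_dvd hk
    (Nat.dvd_of_mem_primeFactors hp)

theorem Nat.apply_eq_prod_primeFactors_filter {β : Type*} [CommMonoid β] (f : ℕ → β)
    (hone : f 1 = 1) (hmul : ∀ a b, 0 < a → 0 < b → Nat.Coprime a b → f (a * b) = f a * f b)
    (hpp : ∀ p m : ℕ, p.Prime → 1 ≤ m → f (p ^ m) = f p) {Q : Set ℕ}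
    (hout : ∀ p, p.Prime → p ∉ Q → f p = 1) {k : ℕ} (hk : k ≠ 0) :
    f k = ∏ p ∈ k.primeFactors with p ∈ Q, f p := by
  rw [Nat.apply_eq_prod_primeFactors f hone hmul hpp hk]
  exact (prod_filter_of_ne fun p hp hp1 =>
    by_contra fun hpQ => hp1 (hout p (Nat.prime_of_mem_primeFactors hp) hpQ)).symm

theorem mul_prod_le_sum_powerset_of_sum_divisors_nonneg (lam : ℕ → ℝ)
    (hlam : ∀ N : ℕ, 1 < N → 0 ≤ ∑ d ∈ N.divisors, lam d) {P : Finset ℕ}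
    (hP : ∀ p ∈ P, p.Prime) (g : ℕ → ℝ) (hg0 : ∀ p ∈ P, 0 ≤ g p) (hg1 : ∀ p ∈ P, g p ≤ 1) :
    lam 1 * ∏ p ∈ P, g p ≤ ∑ T ∈ P.powerset, lam (∏ p ∈ T, p) * ∏ p ∈ T, (1 - g p) := by
  refine le_of_eq_of_le (by rw [prod_empty]) <|
    mul_prod_le_sum_powerset_mul_prod_one_sub (fun T => lam (∏ p ∈ T, p)) g hg0 hg1 ?_
  intro S hSP hS
  have hSprime : ∀ p ∈ S, p.Prime := fun p hp => hP p (hSP hp)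
  have hsq := Nat.squarefree_prod_of_prime hSprime
  have hpf : (∏ p ∈ S, p).primeFactors = S := Nat.primeFactors_prod hSprime
  have hgt : 1 < ∏ p ∈ S, p := by
    refine Nat.one_lt_iff_ne_zero_and_ne_one.mpr ⟨hsq.ne_zero, fun h1 => ?_⟩
    rw [h1, Nat.primeFactors_one] at hpf
    exact hS.ne_empty hpf.symm
  simpa only [Nat.sum_divisors_eq_sum_powerset_primeFactors hsq, hpf] using hlam _ hgt

theorem sum_powerset_le_mul_prod_of_sum_divisors_nonpos (lam : ℕ → ℝ)
    (hlam : ∀ N : ℕ, 1 < N → ∑ d ∈ N.divisors, lam d ≤ 0) {P : Finset ℕ}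
    (hP : ∀ p ∈ P, p.Prime) (g : ℕ → ℝ) (hg0 : ∀ p ∈ P, 0 ≤ g p) (hg1 : ∀ p ∈ P, g p ≤ 1) :
    ∑ T ∈ P.powerset, lam (∏ p ∈ T, p) * ∏ p ∈ T, (1 - g p) ≤ lam 1 * ∏ p ∈ P, g p := by
  have h := mul_prod_le_sum_powerset_of_sum_divisors_nonneg (fun d => -lam d)
    (fun N hN => by simpa only [sum_neg_distrib, neg_nonneg] using hlam N hN) hP g hg0 hg1
  simpa only [neg_mul, sum_neg_distrib, neg_le_neg_iff] using h

theorem Finset.exists_eq_on_of_pairwise_disjoint {ι α β : Type*} [Nonempty β] (s : ι → Finset α)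
    (hs : Pairwise (Disjoint on s)) (f : ι → α → β) :
    ∃ g : α → β, ∀ i, ∀ a ∈ s i, g a = f i a := by
  refine ⟨fun a => if h : ∃ i, a ∈ s i then f h.choose a else Classical.arbitrary β,
    fun i a ha => ?_⟩
  have h : ∃ i, a ∈ s i := ⟨i, ha⟩
  obtain rfl : h.choose = i := by_contra fun hne => disjoint_left.mp (hs hne) h.choose_spec ha
  exact dif_pos h

section Reindexing

variable {ι β : Type*} [Fintype ι] [DecidableEq ι] [AddCommMonoid β]

theorem sum_filter_piFinset_divisors_eq_sum_piFinset_powerset (k : ι → ℕ) (hk : ∀ i, k i ≠ 0)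
    (Q : ι → Set ℕ)
    [DecidablePred fun d : ι → ℕ => ∀ i, Squarefree (d i) ∧ ∀ p ∈ (d i).primeFactors, p ∈ Q i]
    (F : (ι → ℕ) → β) :
    ∑ d ∈ (Fintype.piFinset fun i => (k i).divisors).filter
        (fun d => ∀ i, Squarefree (d i) ∧ ∀ p ∈ (d i).primeFactors, p ∈ Q i), F d
      = ∑ S ∈ Fintype.piFinset fun i => {p ∈ (k i).primeFactors | p ∈ Q i}.powerset,
          F fun i => ∏ p ∈ S i, p := by
  have hprime {S : ι → Finset ℕ} (h : ∀ i, S i ⊆ {p ∈ (k i).primeFactors | p ∈ Q i}) (i : ι) :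
      ∀ p ∈ S i, p.Prime := fun p hp => Nat.prime_of_mem_primeFactors (mem_filter.mp (h i hp)).1
  refine sum_nbij' (fun d i => (d i).primeFactors) (fun S i => ∏ p ∈ S i, p)
    (fun d h => ?_) (fun S h => ?_) (fun d h => ?_) (fun S h => ?_) (fun d h => ?_)
  all_goals simp only [mem_filter, Fintype.mem_piFinset, mem_powerset, Nat.mem_divisors] at h ⊢
  · intro i p hp
    exact mem_filter.mpr ⟨Nat.primeFactors_mono (h.1 i).1 (hk i) hp, (h.2 i).2 p hp⟩
  · refine ⟨fun i => ⟨?_, hk i⟩, fun i => ⟨Nat.squarefree_prod_of_prime (hprime h i), ?_⟩⟩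
    · exact prod_primes_dvd _ (fun p hp => (hprime h i p hp).prime)
        fun p hp => Nat.dvd_of_mem_primeFactors (mem_filter.mp (h i hp)).1
    · rw [Nat.primeFactors_prod (hprime h i)]
      exact fun p hp => (mem_filter.mp (h i hp)).2
  · exact funext fun i => Nat.prod_primeFactors_of_squarefree (h.2 i).1
  · exact funext fun i => Nat.primeFactors_prod (hprime h i)
  · exact congrArg F (funext fun i => (Nat.prod_primeFactors_of_squarefree (h.2 i).1).symm)

theorem sum_piFinset_powerset_eq_sum_powerset_biUnion {α : Type*} [DecidableEq α]
    (P : ι → Finset α) (hP : Pairwise (Disjoint on P)) (F : Finset α → β) :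
    ∑ S ∈ Fintype.piFinset fun i => (P i).powerset, F (univ.biUnion S)
      = ∑ T ∈ (univ.biUnion P).powerset, F T := by
  refine sum_nbij' (fun S => univ.biUnion S) (fun T i => T ∩ P i)
    (fun S h => ?_) (fun T h => ?_) (fun S h => ?_) (fun T h => ?_) (fun _ _ => rfl)
  all_goals simp only [Fintype.mem_piFinset, mem_powerset] at h ⊢
  · exact biUnion_mono fun i _ => h i
  · exact fun i => inter_subset_right
  · funext i
    ext x
    simp only [mem_inter, mem_biUnion, mem_univ, true_and]
    refine ⟨fun ⟨⟨j, hj⟩, hi⟩ => ?_, fun hx => ⟨⟨i, hx⟩, h i hx⟩⟩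
    obtain rfl : j = i := by_contra fun hji => disjoint_left.mp (hP hji) (h j hj) hi
    exact hj
  · rw [← inter_biUnion, inter_eq_left.mpr h]

theorem sum_neutralised_eq_sum_powerset_biUnion (k : ι → ℕ) (hk : ∀ i, k i ≠ 0) (Q : ι → Set ℕ)
    [DecidablePred fun d : ι → ℕ => ∀ i, Squarefree (d i) ∧ ∀ p ∈ (d i).primeFactors, p ∈ Q i]
    (lam : ℕ → ℝ) (f : ι → ℕ → ℝ) (g : ℕ → ℝ)
    (hdisj : Pairwise (Disjoint on fun i => {p ∈ (k i).primeFactors | p ∈ Q i}))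
    (hg : ∀ i, ∀ p ∈ {p ∈ (k i).primeFactors | p ∈ Q i}, g p = f i p) :
    ∑ d ∈ (Fintype.piFinset fun i => (k i).divisors).filter
        (fun d => ∀ i, Squarefree (d i) ∧ ∀ p ∈ (d i).primeFactors, p ∈ Q i),
        lam (∏ i, d i) * ∏ i, ∏ p ∈ (d i).primeFactors, (1 - f i p)
      = ∑ T ∈ (univ.biUnion fun i => {p ∈ (k i).primeFactors | p ∈ Q i}).powerset,
          lam (∏ p ∈ T, p) * ∏ p ∈ T, (1 - g p) := by
  rw [sum_filter_piFinset_divisors_eq_sum_piFinset_powerset k hk Q,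
    ← sum_piFinset_powerset_eq_sum_powerset_biUnion _ hdisj]
  refine sum_congr rfl fun S hS => ?_
  have hSP : ∀ i, S i ⊆ {p ∈ (k i).primeFactors | p ∈ Q i} := by
    simpa only [Fintype.mem_piFinset, mem_powerset] using hS
  have hSdisj : Set.PairwiseDisjoint ↑(univ : Finset ι) S :=
    fun i _ j _ hij => (hdisj hij).mono (hSP i) (hSP j)
  have hprime i : ∀ p ∈ S i, p.Prime := fun p hp =>
    Nat.prime_of_mem_primeFactors (mem_filter.mp (hSP i hp)).1
  simp only [Nat.primeFactors_prod (hprime _)]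
  rw [prod_biUnion hSdisj, prod_biUnion hSdisj]
  exact congrArg _ (prod_congr rfl fun i _ => prod_congr rfl fun p hp => by rw [hg i p (hSP i hp)])

end Reindexing

theorem hooley_neutraliser_general (n : ℕ)
    (lamMinus lamPlus : ℕ → ℝ)
    (hlam1m : lamMinus 1 = 1) (hlam1p : lamPlus 1 = 1)
    (hsieve : ∀ N : ℕ, 1 < N →
      (∑ d ∈ N.divisors, lamMinus d) ≤ 0 ∧ 0 ≤ ∑ d ∈ N.divisors, lamPlus d)
    (Pp : Fin n → Set ℕ)
    (f : Fin n → ℕ → ℝ)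
    (hone : ∀ i, f i 1 = 1)
    (hmul : ∀ i a b, 0 < a → 0 < b → Nat.Coprime a b → f i (a * b) = f i a * f i b)
    (hpos : ∀ i k, 0 < k → 0 < f i k)
    (hpp : ∀ i (p m : ℕ), p.Prime → 1 ≤ m → f i (p ^ m) = f i p)
    (hin : ∀ i p, p ∈ Pp i → f i p < 1)
    (hout : ∀ i p, p.Prime → p ∉ Pp i → f i p = 1)
    (k : Fin n → ℕ) (hk : ∀ i, 0 < k i)
    (hcop : ∀ i j, i ≠ j → Nat.Coprime (k i) (k j)) :
    (∑ d ∈ (Fintype.piFinset fun i => (k i).divisors).filter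
        (fun d => ∀ i, Squarefree (d i) ∧ ∀ p ∈ (d i).primeFactors, p ∈ Pp i),
        lamMinus (∏ i, d i) * ∏ i, ∏ p ∈ (d i).primeFactors, (1 - f i p))
      ≤ ∏ i, f i (k i) ∧
    (∏ i, f i (k i)) ≤
      ∑ d ∈ (Fintype.piFinset fun i => (k i).divisors).filter
        (fun d => ∀ i, Squarefree (d i) ∧ ∀ p ∈ (d i).primeFactors, p ∈ Pp i),
        lamPlus (∏ i, d i) * ∏ i, ∏ p ∈ (d i).primeFactors, (1 - f i p) := by
  set P : Fin n → Finset ℕ := fun i => {p ∈ (k i).primeFactors | p ∈ Pp i}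
  have hdisj : Pairwise (Disjoint on P) := fun i j hij =>
    (hcop i j hij).disjoint_primeFactors.mono (filter_subset _ _) (filter_subset _ _)
  obtain ⟨g, hg⟩ := exists_eq_on_of_pairwise_disjoint P hdisj f
  have hgP (p : ℕ) (hp : p ∈ univ.biUnion P) : p.Prime ∧ 0 ≤ g p ∧ g p ≤ 1 := by
    obtain ⟨i, -, hi⟩ := mem_biUnion.mp hp
    have hpr := Nat.prime_of_mem_primeFactors (mem_filter.mp hi).1
    rw [hg i p hi]
    exact ⟨hpr, (hpos i p hpr.pos).le, (hin i p (mem_filter.mp hi).2).le⟩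
  have hprod : ∏ i, f i (k i) = ∏ p ∈ univ.biUnion P, g p := by
    rw [prod_biUnion fun i _ j _ hij => hdisj hij]
    refine prod_congr rfl fun i _ => ?_
    rw [Nat.apply_eq_prod_primeFactors_filter (f i) (hone i) (hmul i) (hpp i) (hout i) (hk i).ne']
    exact prod_congr rfl fun p hp => (hg i p hp).symm
  have hk0 i : k i ≠ 0 := (hk i).ne'
  rw [sum_neutralised_eq_sum_powerset_biUnion k hk0 Pp lamMinus f g hdisj hg,
    sum_neutralised_eq_sum_powerset_biUnion k hk0 Pp lamPlus f g hdisj hg, hprod]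
  constructor
  · simpa only [hlam1m, one_mul] using sum_powerset_le_mul_prod_of_sum_divisors_nonpos lamMinus
      (fun N hN => (hsieve N hN).1)
      (fun p hp => (hgP p hp).1) g (fun p hp => (hgP p hp).2.1) (fun p hp => (hgP p hp).2.2)
  · simpa only [hlam1p, one_mul] using mul_prod_le_sum_powerset_of_sum_divisors_nonneg lamPlus
      (fun N hN => (hsieve N hN).2)
      (fun p hp => (hgP p hp).1) g (fun p hp => (hgP p hp).2.1) (fun p hp => (hgP p hp).2.2)

/-- Hooley neutralisers. Given upper/lower sieve weights `λ±`,
sets of primes `Ppᵢ` and multiplicative functions `fᵢ` as in the hypotheses,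
for pairwise coprime `k₁, …, kₙ` the product `∏ fᵢ(kᵢ)` is squeezed between the
neutralised sums over squarefree `dᵢ ∣ kᵢ` supported on primes of `Ppᵢ`. -/
theorem hooley_neutraliser (n : ℕ)
    (lamMinus lamPlus : ℕ → ℝ)
    (hlam1m : lamMinus 1 = 1) (hlam1p : lamPlus 1 = 1)
    (hsieve : ∀ N : ℕ, 1 < N →
      (∑ d ∈ N.divisors, lamMinus d) ≤ 0 ∧ 0 ≤ ∑ d ∈ N.divisors, lamPlus d)
    (Pp : Fin n → Set ℕ) (hPp : ∀ i, ∀ p ∈ Pp i, Nat.Prime p)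
    (f : Fin n → ℕ → ℝ)
    (hone : ∀ i, f i 1 = 1)
    (hmul : ∀ i a b, 0 < a → 0 < b → Nat.Coprime a b → f i (a * b) = f i a * f i b)
    (hpos : ∀ i k, 0 < k → 0 < f i k)
    (hpp : ∀ i (p m : ℕ), p.Prime → 1 ≤ m → f i (p ^ m) = f i p)
    (hin : ∀ i p, p ∈ Pp i → f i p < 1)
    (hout : ∀ i p, p.Prime → p ∉ Pp i → f i p = 1)
    (k : Fin n → ℕ) (hk : ∀ i, 0 < k i)
    (hcop : ∀ i j, i ≠ j → Nat.Coprime (k i) (k j)) :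
    (∑ d ∈ (Fintype.piFinset fun i => (k i).divisors).filter
        (fun d => ∀ i, Squarefree (d i) ∧ ∀ p ∈ (d i).primeFactors, p ∈ Pp i),
        lamMinus (∏ i, d i) * ∏ i, ∏ p ∈ (d i).primeFactors, (1 - f i p))
      ≤ ∏ i, f i (k i) ∧
    (∏ i, f i (k i)) ≤
      ∑ d ∈ (Fintype.piFinset fun i => (k i).divisors).filter
        (fun d => ∀ i, Squarefree (d i) ∧ ∀ p ∈ (d i).primeFactors, p ∈ Pp i),
        lamPlus (∏ i, d i) * ∏ i, ∏ p ∈ (d i).primeFactors, (1 - f i p) :=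
  hooley_neutraliser_general n lamMinus lamPlus hlam1m hlam1p hsieve Pp f hone hmul hpos hpp hin
    hout k hk hcop
end

section
/- Let n ∈ ℕ and let D₀ < z be real numbers with D₀ ≥ 2. Set P(z) = ∏_{D₀ < p ≤ z} p (product over primes) and, for a nonzero integer k, ω(k;z) = #{p prime : p ∣ k, D₀ < p ≤ z}. Then for every k ∈ (ℤ∖{0})ⁿ with gcd(kᵢ,k_j) = 1 for all i ≠ j, one has ∏_{i=1}^n 2^{−ω(kᵢ;z)} ≥ Σ λ⁻_{d₁⋯dₙ} / (τ(d₁)⋯τ(dₙ)), where the sum runs over n-tuples (d₁,…,dₙ) of positive integers with dᵢ ∣ gcd(kᵢ, P(z)) and gcd(dᵢ,d_j) = 1 for i ≠ j, and τ denotes the number-of-divisors function. -/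
/-!
Put `m i = gcd(k i, P(z))`. These are squarefree and pairwise coprime, so `d ↦ ∏ i, d i`
identifies the tuples of the sum with the divisors `D` of `M = ∏ i, m i`, and by multiplicativity
of `τ` the sum becomes `∑_{D ∣ M} λ⁻(D) / τ(D)`. As `M` is squarefree,
`τ(M) / τ(D) = τ(M / D) = #{e : D ∣ e ∣ M}`, so `τ(M)` times the sum is
`∑_{e ∣ M} ∑_{D ∣ e} λ⁻(D) ≤ 1`, only `e = 1` contributing positively. Finally
`1 / τ(M) = ∏ i, 2^{-ω(m i)} ≤ ∏ i, 2^{-ω(k i; z)}`, since every prime of `k i` in `(D₀, z]`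
divides `m i`.
-/

open scoped Classical

open Finset ArithmeticFunction Function
open scoped ArithmeticFunction.zeta

namespace Nat

theorem card_divisors_of_squarefree {n : ℕ} (hn : Squarefree n) :
    #n.divisors = 2 ^ #n.primeFactors := by
  rw [Nat.card_divisors hn.ne_zero, ← prod_const]
  refine prod_congr rfl fun p hp => ?_
  have hle := (Nat.squarefree_iff_factorization_le_one hn.ne_zero).mp hn p
  have hpos : 0 < n.factorization p := Nat.pos_of_ne_zero (Finsupp.mem_support_iff.mp hp)
  omega

theorem card_divisors_eq_mul_card_divisors_div {n d : ℕ} (hn : Squarefree n) (hd : d ∣ n) :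
    #n.divisors = #d.divisors * #(n / d).divisors := by
  have hprod : d * (n / d) = n := Nat.mul_div_cancel' hd
  rw [← hprod] at hn
  rw [← (Nat.coprime_of_squarefree_mul hn).card_divisors_mul, hprod]

theorem card_divisors_prod {ι : Type*} {s : Finset ι} {f : ι → ℕ}
    (hf : (s : Set ι).Pairwise (Coprime on f)) :
    #(∏ i ∈ s, f i).divisors = ∏ i ∈ s, #(f i).divisors := by
  simp only [← sigma_zero_apply, isMultiplicative_sigma.map_prod f s hf]

theorem sum_sum_divisors_eq_sum_mul_card_divisors_div {R : Type*} [CommSemiring R]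
    (f : ℕ → R) (n : ℕ) :
    ∑ e ∈ n.divisors, ∑ d ∈ e.divisors, f d = ∑ d ∈ n.divisors, f d * #(n / d).divisors := by
  let F : ArithmeticFunction R := ⟨fun d => if d = 0 then 0 else f d, if_pos rfl⟩
  have hF : ∀ {m d : ℕ}, d ∈ m.divisors → F d = f d := fun hd => by
    simp [F, (pos_of_mem_divisors hd).ne']
  have hζζ : ∀ m, ((ζ : ArithmeticFunction R) * ζ) m = #m.divisors := fun m => by
    rw [coe_mul_zeta_apply, ← nsmul_one, ← sum_const]
    exact sum_congr rfl fun d hd => by simp [(pos_of_mem_divisors hd).ne']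
  calc ∑ e ∈ n.divisors, ∑ d ∈ e.divisors, f d = (F * ζ * ζ) n := by
        simp only [coe_mul_zeta_apply]
        exact sum_congr rfl fun e _ => sum_congr rfl fun d hd => (hF hd).symm
    _ = (F * (ζ * ζ)) n := by rw [mul_assoc]
    _ = ∑ d ∈ n.divisors, f d * #(n / d).divisors := by
        rw [mul_apply, sum_divisorsAntidiagonal fun a b => F a * ((ζ : ArithmeticFunction R) * ζ) b]
        exact sum_congr rfl fun d hd => by rw [hF hd, hζζ]

theorem gcd_prod_of_pairwise_coprime {ι : Type*} {s : Finset ι} {f : ι → ℕ} (n : ℕ)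
    (hf : (s : Set ι).Pairwise (Coprime on f)) :
    n.gcd (∏ i ∈ s, f i) = ∏ i ∈ s, n.gcd (f i) := by
  induction s using Finset.cons_induction with
  | empty => simp
  | cons a s ha ih =>
    rw [coe_cons, Set.pairwise_insert] at hf
    have hcop : (f a).Coprime (∏ i ∈ s, f i) :=
      Coprime.prod_right fun i hi => (hf.2 i hi fun h => ha (h ▸ hi)).1
    rw [prod_cons, prod_cons, hcop.gcd_mul, ih hf.1]

section PiDivisors

variable {ι : Type*} [Fintype ι] [DecidableEq ι] {m : ι → ℕ}

theorem coprime_of_mem_piFinset_divisors (hm : Pairwise (Coprime on m)) {d : ι → ℕ}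
    (hd : d ∈ Fintype.piFinset fun i => (m i).divisors) : Pairwise (Coprime on d) :=
  fun i j hij => ((hm hij).coprime_dvd_left (dvd_of_mem_divisors (Fintype.mem_piFinset.mp hd i)))
    |>.coprime_dvd_right (dvd_of_mem_divisors (Fintype.mem_piFinset.mp hd j))

theorem gcd_prod_of_mem_piFinset_divisors (hm : Pairwise (Coprime on m)) {d : ι → ℕ}
    (hd : d ∈ Fintype.piFinset fun i => (m i).divisors) (i : ι) :
    (∏ j, d j).gcd (m i) = d i := by
  have hdvd : ∀ j, d j ∣ m j := fun j => dvd_of_mem_divisors (Fintype.mem_piFinset.mp hd j)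
  have hcop : (∏ j ∈ univ.erase i, d j).Coprime (m i) :=
    Coprime.prod_left fun j hj => (hm (ne_of_mem_erase hj)).coprime_dvd_left (hdvd j)
  rw [← mul_prod_erase univ d (mem_univ i), hcop.gcd_mul_right_cancel, gcd_eq_left (hdvd i)]

theorem sum_piFinset_divisors_prod {M : Type*} [AddCommMonoid M] (hm : Pairwise (Coprime on m))
    (g : ℕ → M) :
    ∑ d ∈ Fintype.piFinset (fun i => (m i).divisors), g (∏ i, d i) =
      ∑ D ∈ (∏ i, m i).divisors, g D := by
  refine sum_nbij' (fun d => ∏ i, d i) (fun D i => D.gcd (m i)) (fun d hd => ?_) (fun D hD => ?_)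
    (fun d hd => funext (gcd_prod_of_mem_piFinset_divisors hm hd)) (fun D hD => ?_) fun _ _ => rfl
  · simp only [Fintype.mem_piFinset, mem_divisors] at hd ⊢
    exact ⟨prod_dvd_prod_of_dvd _ _ fun i _ => (hd i).1, prod_ne_zero_iff.mpr fun i _ => (hd i).2⟩
  · simp only [Fintype.mem_piFinset, mem_divisors, prod_ne_zero_iff] at hD ⊢
    exact fun i => ⟨gcd_dvd_right _ _, hD.2 i (mem_univ i)⟩
  · rw [← gcd_prod_of_pairwise_coprime D fun i _ j _ hij => hm hij,
      gcd_eq_left (dvd_of_mem_divisors hD)]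

end PiDivisors

end Nat

section LowerBoundSieve

variable {lam : ℕ → ℝ}

theorem sum_sum_divisors_le_one (hlam1 : lam 1 = 1)
    (hsieve : ∀ N : ℕ, 1 < N → ∑ d ∈ N.divisors, lam d ≤ 0) {n : ℕ} (hn : n ≠ 0) :
    ∑ e ∈ n.divisors, ∑ d ∈ e.divisors, lam d ≤ 1 := by
  rw [← add_sum_erase _ _ (Nat.one_mem_divisors.mpr hn), Nat.divisors_one, sum_singleton, hlam1]
  refine add_le_of_le_of_nonpos le_rfl (sum_nonpos fun e he => hsieve e ?_)
  have he0 := Nat.pos_of_mem_divisors (mem_of_mem_erase he)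
  have he1 := ne_of_mem_erase he
  omega

theorem sum_div_card_divisors_le_of_squarefree (hlam1 : lam 1 = 1)
    (hsieve : ∀ N : ℕ, 1 < N → ∑ d ∈ N.divisors, lam d ≤ 0) {n : ℕ} (hn : Squarefree n) :
    ∑ d ∈ n.divisors, lam d / #d.divisors ≤ (#n.divisors : ℝ)⁻¹ := by
  calc ∑ d ∈ n.divisors, lam d / #d.divisors
      = (∑ d ∈ n.divisors, lam d * #(n / d).divisors) / #n.divisors := by
        rw [sum_div]
        refine sum_congr rfl fun d hd => ?_
        have hτ : (#n.divisors : ℝ) = #d.divisors * #(n / d).divisors := by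
          exact_mod_cast Nat.card_divisors_eq_mul_card_divisors_div hn (Nat.dvd_of_mem_divisors hd)
        have hτn : (#n.divisors : ℝ) ≠ 0 := by
          simpa using Nat.nonempty_divisors.mpr hn.ne_zero
        rw [hτ, mul_div_mul_right _ _ (right_ne_zero_of_mul (hτ ▸ hτn))]
    _ = (∑ e ∈ n.divisors, ∑ d ∈ e.divisors, lam d) / #n.divisors := by
        rw [Nat.sum_sum_divisors_eq_sum_mul_card_divisors_div]
    _ ≤ 1 / #n.divisors := by
        gcongr
        exact sum_sum_divisors_le_one hlam1 hsieve hn.ne_zero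
    _ = (#n.divisors : ℝ)⁻¹ := one_div _

end LowerBoundSieve

/-- `P(z) = ∏ p ∈ sievePrimes D₀ z, p`. -/
noncomputable def sievePrimes (D₀ z : ℝ) : Finset ℕ :=
  (range (⌊z⌋₊ + 1)).filter fun p => Nat.Prime p ∧ D₀ < (p : ℝ)

section SievePrimes

variable {D₀ z : ℝ}

theorem mem_sievePrimes {p : ℕ} : p ∈ sievePrimes D₀ z ↔ p.Prime ∧ D₀ < p ∧ (p : ℝ) ≤ z := by
  simp only [sievePrimes, mem_filter, mem_range, Nat.lt_succ_iff]
  constructor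
  · rintro ⟨hpz, hp, hD⟩
    exact ⟨hp, hD, (Nat.le_floor_iff' hp.ne_zero).mp hpz⟩
  · rintro ⟨hp, hD, hpz⟩
    exact ⟨(Nat.le_floor_iff' hp.ne_zero).mpr hpz, hp, hD⟩

theorem squarefree_prod_sievePrimes : Squarefree (∏ p ∈ sievePrimes D₀ z, p) := by
  have hprime : ∀ p ∈ sievePrimes D₀ z, p.Prime := fun p hp => (mem_sievePrimes.mp hp).1
  refine squarefree_prod_of_pairwise_isCoprime (fun p hp q hq hpq => ?_)
    fun p hp => (hprime p hp).prime.squarefree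
  exact Nat.coprime_iff_isRelPrime.mp ((Nat.coprime_primes (hprime p hp) (hprime q hq)).mpr hpq)

theorem card_filter_primeFactors_le_card_primeFactors_gcd (k : ℤ) :
    #(k.natAbs.primeFactors.filter fun p => D₀ < (p : ℝ) ∧ (p : ℝ) ≤ z) ≤
      #(Int.gcd k (∏ p ∈ sievePrimes D₀ z, p : ℕ)).primeFactors := by
  -- The ascription `(p : ℝ)` makes the filter range over the image of the prime factors in `ℝ`
  -- (through the `Finset` monad); the cast is injective, so the count is unchanged.
  simp only [Finset.pure_def, Finset.bind_def, Finset.sup_singleton_apply]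
  rw [filter_image, card_image_of_injective _ Nat.cast_injective]
  refine card_le_card fun p hp => ?_
  obtain ⟨hpk, hD, hpz⟩ := mem_filter.mp hp
  have hp := Nat.prime_of_mem_primeFactors hpk
  have hpP : p ∣ ∏ q ∈ sievePrimes D₀ z, q :=
    dvd_prod_of_mem _ (mem_sievePrimes.mpr ⟨hp, hD, hpz⟩)
  exact Nat.mem_primeFactors.mpr ⟨hp, Nat.dvd_gcd (Nat.dvd_of_mem_primeFactors hpk) hpP,
    (Nat.gcd_pos_of_pos_right _ (Nat.pos_of_ne_zero squarefree_prod_sievePrimes.ne_zero)).ne'⟩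

end SievePrimes

theorem inv_card_divisors_of_squarefree {n : ℕ} (hn : Squarefree n) :
    (#n.divisors : ℝ)⁻¹ = 2 ^ (-(#n.primeFactors : ℤ)) := by
  rw [Nat.card_divisors_of_squarefree hn, zpow_neg, zpow_natCast]
  push_cast
  rfl

theorem neutralised_lower_bound_omega_general (n : ℕ)
    (lamMinus : ℕ → ℝ) (hlam1 : lamMinus 1 = 1)
    (hsieve : ∀ N : ℕ, 1 < N → (∑ d ∈ N.divisors, lamMinus d) ≤ 0)
    (D₀ z : ℝ)
    (k : Fin n → ℤ)
    (hcop : ∀ i j, i ≠ j → IsCoprime (k i) (k j)) :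
    (∑ d ∈ (Fintype.piFinset fun i =>
        (Int.gcd (k i) ((∏ p ∈ (Finset.range (⌊z⌋₊ + 1)).filter
            (fun p => Nat.Prime p ∧ D₀ < (p : ℝ)), p : ℕ) : ℤ)).divisors).filter
        (fun d => ∀ i j, i ≠ j → Nat.Coprime (d i) (d j)),
        lamMinus (∏ i, d i) / ∏ i, ((d i).divisors.card : ℝ))
      ≤ ∏ i, (2 : ℝ) ^
          (-((((k i).natAbs.primeFactors.filter
              (fun p => D₀ < (p : ℝ) ∧ (p : ℝ) ≤ z)).card : ℤ))) := by
  set m : Fin n → ℕ := fun i => Int.gcd (k i) (∏ p ∈ sievePrimes D₀ z, p : ℕ)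
  have hm_cop : Pairwise (Nat.Coprime on m) := fun i j hij => by
    have hk : Nat.Coprime (k i).natAbs (k j).natAbs :=
      Int.isCoprime_iff_gcd_eq_one.mp (hcop i j hij)
    exact (hk.coprime_dvd_left (Nat.gcd_dvd_left _ _)).coprime_dvd_right (Nat.gcd_dvd_left _ _)
  have hm_sq : ∀ i, Squarefree (m i) := fun i =>
    squarefree_prod_sievePrimes.squarefree_of_dvd (Nat.gcd_dvd_right _ _)
  have hM_sq : Squarefree (∏ i, m i) := squarefree_prod_of_pairwise_isCoprime
    (fun i _ j _ hij => Nat.coprime_iff_isRelPrime.mp (hm_cop hij)) fun i _ => hm_sq i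
  change ∑ d ∈ (Fintype.piFinset fun i => (m i).divisors).filter _, _ ≤ _
  calc _ = ∑ d ∈ Fintype.piFinset (fun i => (m i).divisors),
          lamMinus (∏ i, d i) / #(∏ i, d i).divisors := by
        rw [filter_true_of_mem fun d hd i j hij =>
          Nat.coprime_of_mem_piFinset_divisors hm_cop hd hij]
        refine sum_congr rfl fun d hd => ?_
        rw [Nat.card_divisors_prod fun i _ j _ hij =>
          Nat.coprime_of_mem_piFinset_divisors hm_cop hd hij]
        push_cast
        rfl
    _ = ∑ D ∈ (∏ i, m i).divisors, lamMinus D / #D.divisors :=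
        Nat.sum_piFinset_divisors_prod hm_cop fun D => lamMinus D / #D.divisors
    _ ≤ (#(∏ i, m i).divisors : ℝ)⁻¹ := sum_div_card_divisors_le_of_squarefree hlam1 hsieve hM_sq
    _ = ∏ i, (2 : ℝ) ^ (-(#(m i).primeFactors : ℤ)) := by
        rw [Nat.card_divisors_prod fun i _ j _ hij => hm_cop hij, Nat.cast_prod, ← prod_inv_distrib]
        exact prod_congr rfl fun i _ => inv_card_divisors_of_squarefree (hm_sq i)
    _ ≤ _ := prod_le_prod (fun i _ => by positivity) fun i _ => zpow_le_zpow_right₀ one_le_two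
        (neg_le_neg (Nat.cast_le.mpr (card_filter_primeFactors_le_card_primeFactors_gcd (k i))))

/-- Lower-bound sieve weights against the function `2^{-ω(k;z)}`:
for pairwise coprime nonzero integers `k₁,…,kₙ`,
`∏ᵢ 2^{-ω(kᵢ;z)} ≥ Σ λ⁻_{d₁⋯dₙ}/(τ(d₁)⋯τ(dₙ))`, the sum being over pairwise coprime
`dᵢ ∣ gcd(kᵢ, P(z))`, where `P(z)` is the product of primes `D₀ < p ≤ z` and
`ω(k;z)` counts prime divisors of `k` in `(D₀, z]`. -/
theorem neutralised_lower_bound_omega (n : ℕ)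
    (lamMinus : ℕ → ℝ) (hlam1 : lamMinus 1 = 1)
    (hsieve : ∀ N : ℕ, 1 < N → (∑ d ∈ N.divisors, lamMinus d) ≤ 0)
    (D₀ z : ℝ) (hD₀ : 2 ≤ D₀) (hz : D₀ < z)
    (k : Fin n → ℤ) (hk : ∀ i, k i ≠ 0)
    (hcop : ∀ i j, i ≠ j → IsCoprime (k i) (k j)) :
    (∑ d ∈ (Fintype.piFinset fun i =>
        (Int.gcd (k i) ((∏ p ∈ (Finset.range (⌊z⌋₊ + 1)).filter
            (fun p => Nat.Prime p ∧ D₀ < (p : ℝ)), p : ℕ) : ℤ)).divisors).filter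
        (fun d => ∀ i j, i ≠ j → Nat.Coprime (d i) (d j)),
        lamMinus (∏ i, d i) / ∏ i, ((d i).divisors.card : ℝ))
      ≤ ∏ i, (2 : ℝ) ^
          (-((((k i).natAbs.primeFactors.filter
              (fun p => D₀ < (p : ℝ) ∧ (p : ℝ) ≤ z)).card : ℤ))) :=
  neutralised_lower_bound_omega_general n lamMinus hlam1 hsieve D₀ z k hcop
end

section
/- Let G ⊆ ℤ² be a rank-2 sublattice that is primitive, i.e. the only integers δ with G ⊆ δℤ² are δ = ±1, and let k be a squarefree positive integer dividing det(G). Then the sublattice G(k) = {x ∈ G : k divides both coordinates of x} = G ∩ (kℤ)² satisfies det(G(k)) = k·det(G). -/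
/-!
Reduction modulo `k` maps `G` onto a subgroup of `(ℤ/k)²` of order `[G : G ∩ (kℤ)²]`, and this
relative index is multiplicative over coprime factors of `k`, so it suffices to treat a prime
`p ∣ det G`. The image of `G` in `(ℤ/p)²` is nontrivial by primitivity, and it is not all of
`(ℤ/p)²`: otherwise multiplication by `p` would be onto, hence bijective, on the finite group
`ℤ²/G`, which by Cauchy's theorem has an element of order `p`. So the image has order `p`, and
`det G(k) = [G : G(k)] · det G = k · det G`.
-/

open AddSubgroup

namespace AddSubgroup

variable {A : Type*} [AddGroup A] {H K L : AddSubgroup A}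

theorem relIndex_inf_of_coprime (hH : H.relIndex L ≠ 0) (hK : K.relIndex L ≠ 0)
    (hHK : (H.relIndex L).Coprime (K.relIndex L)) :
    (H ⊓ K).relIndex L = H.relIndex L * K.relIndex L :=
  le_antisymm relIndex_inf_le <|
    Nat.le_of_dvd (Nat.pos_of_ne_zero (relIndex_inf_ne_zero hH hK)) <|
      hHK.mul_dvd_of_dvd_of_dvd (relIndex_dvd_of_le_left L inf_le_left)
        (relIndex_dvd_of_le_left L inf_le_right)

end AddSubgroup

theorem not_dvd_card_of_nsmul_surjective {Q : Type*} [AddGroup Q] [Finite Q] {p : ℕ}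
    (hp : p.Prime) (h : Function.Surjective fun q : Q => p • q) : ¬p ∣ Nat.card Q := by
  have := Fact.mk hp
  intro hdvd
  obtain ⟨q, hq⟩ := exists_prime_addOrderOf_dvd_card' p hdvd
  have hq0 : q = 0 :=
    Finite.injective_iff_surjective.mpr h (by simp [← hq, addOrderOf_nsmul_eq_zero])
  exact hp.one_lt.ne' (by rw [← hq, hq0, addOrderOf_zero])

def scaledLattice (n : ℕ) : AddSubgroup (ℤ × ℤ) :=
  (zmultiples (n : ℤ)).prod (zmultiples (n : ℤ))

theorem mem_scaledLattice {n : ℕ} {x : ℤ × ℤ} :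
    x ∈ scaledLattice n ↔ (n : ℤ) ∣ x.1 ∧ (n : ℤ) ∣ x.2 := by
  simp only [scaledLattice, mem_prod, Int.mem_zmultiples_iff]

theorem scaledLattice_one : scaledLattice 1 = ⊤ := by
  ext x
  simp [mem_scaledLattice]

theorem scaledLattice_mul {a b : ℕ} (hab : a.Coprime b) :
    scaledLattice (a * b) = scaledLattice a ⊓ scaledLattice b := by
  have hab' : IsCoprime (a : ℤ) b := Nat.isCoprime_iff_coprime.mpr hab
  ext x
  simp only [mem_inf, mem_scaledLattice, Nat.cast_mul]
  constructor
  · rintro ⟨h1, h2⟩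
    exact ⟨⟨dvd_of_mul_right_dvd h1, dvd_of_mul_right_dvd h2⟩,
      ⟨dvd_of_mul_left_dvd h1, dvd_of_mul_left_dvd h2⟩⟩
  · rintro ⟨⟨ha1, ha2⟩, hb1, hb2⟩
    exact ⟨hab'.mul_dvd ha1 hb1, hab'.mul_dvd ha2 hb2⟩

def modReduction (n : ℕ) : ℤ × ℤ →+ ZMod n × ZMod n :=
  (Int.castAddHom (ZMod n)).prodMap (Int.castAddHom (ZMod n))

theorem ker_modReduction (n : ℕ) : (modReduction n).ker = scaledLattice n := by
  ext x
  simp [modReduction, mem_scaledLattice, Prod.ext_iff, ZMod.intCast_zmod_eq_zero_iff_dvd]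

def IsPrimitive (G : AddSubgroup (ℤ × ℤ)) : Prop :=
  ∀ δ : ℤ, (∀ x ∈ G, δ ∣ x.1 ∧ δ ∣ x.2) → δ = 1 ∨ δ = -1

section

variable {G : AddSubgroup (ℤ × ℤ)}

theorem IsPrimitive.eq_one_of_le_scaledLattice (hprim : IsPrimitive G) {n : ℕ}
    (h : G ≤ scaledLattice n) : n = 1 := by
  have := hprim n fun x hx => mem_scaledLattice.mp (h hx)
  omega

theorem nsmul_surjective_of_map_modReduction_eq_top {n : ℕ}
    (h : G.map (modReduction n) = ⊤) :
    Function.Surjective fun q : (ℤ × ℤ) ⧸ G => n • q := by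
  rintro ⟨x⟩
  obtain ⟨g, hg, hgx⟩ : ∃ g ∈ G, modReduction n g = modReduction n x :=
    mem_map.mp (h ▸ mem_top _)
  have hxg : x - g ∈ scaledLattice n := by
    rw [← ker_modReduction, AddMonoidHom.mem_ker, map_sub, hgx, sub_self]
  obtain ⟨⟨a, ha⟩, ⟨b, hb⟩⟩ := mem_scaledLattice.mp hxg
  have hab : n • ((a, b) : ℤ × ℤ) = x - g := Prod.ext (by rw [ha]; simp) (by rw [hb]; simp)
  refine ⟨((a, b) : ℤ × ℤ), QuotientAddGroup.eq_iff_sub_mem.mpr ?_⟩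
  simpa [hab] using neg_mem hg

theorem relIndex_scaledLattice_of_prime (hG : G.index ≠ 0) (hprim : IsPrimitive G)
    {p : ℕ} (hp : p.Prime) (hpG : p ∣ G.index) : (scaledLattice p).relIndex G = p := by
  have := Fact.mk hp
  rw [← ker_modReduction, relIndex_ker]
  have hdvd : Nat.card (G.map (modReduction p)) ∣ p ^ 2 := by
    simpa [sq, Nat.card_prod, Nat.card_zmod] using
      card_addSubgroup_dvd_card (G.map (modReduction p))
  obtain ⟨i, hi, hcard⟩ := (Nat.dvd_prime_pow hp).mp hdvd
  interval_cases i
  · rw [pow_zero, card_eq_one, AddSubgroup.map_eq_bot_iff, ker_modReduction] at hcard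
    exact absurd (hprim.eq_one_of_le_scaledLattice hcard) hp.one_lt.ne'
  · rw [hcard, pow_one]
  · have htop : G.map (modReduction p) = ⊤ :=
      eq_top_of_card_eq _ (by rw [hcard, Nat.card_prod, Nat.card_zmod, sq])
    have : Finite ((ℤ × ℤ) ⧸ G) := Nat.finite_of_card_ne_zero hG
    exact absurd hpG
      (not_dvd_card_of_nsmul_surjective hp (nsmul_surjective_of_map_modReduction_eq_top htop))

theorem relIndex_scaledLattice_of_squarefree (hG : G.index ≠ 0) (hprim : IsPrimitive G)
    {k : ℕ} (hk : Squarefree k) (hkG : k ∣ G.index) : (scaledLattice k).relIndex G = k := by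
  induction k using Nat.recOnPosPrimePosCoprime with
  | prime_pow p n hp hn =>
    obtain rfl : n = 1 := ((Nat.squarefree_pow_iff hp.ne_one hn.ne').mp hk).2
    rw [pow_one] at hkG ⊢
    exact relIndex_scaledLattice_of_prime hG hprim hp hkG
  | zero => exact absurd hk not_squarefree_zero
  | one => rw [scaledLattice_one, relIndex_top_left]
  | coprime a b ha hb hab iha ihb =>
    have hGa := iha hk.of_mul_left (dvd_of_mul_right_dvd hkG)
    have hGb := ihb hk.of_mul_right (dvd_of_mul_left_dvd hkG)
    rw [scaledLattice_mul hab,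
      relIndex_inf_of_coprime (by omega) (by omega) (by rwa [hGa, hGb]), hGa, hGb]

end

/-- If `G ⊆ ℤ²` is a primitive rank-2 sublattice (finite index) and `k`
is a squarefree positive integer dividing `det(G) = [ℤ² : G]`, then the sublattice
`G(k) = G ∩ (kℤ)²` has determinant `k · det(G)`. -/
theorem det_inter_primitive_lattice (G : AddSubgroup (ℤ × ℤ)) (hG : G.index ≠ 0)
    (hprim : ∀ δ : ℤ, (∀ x ∈ G, δ ∣ x.1 ∧ δ ∣ x.2) → δ = 1 ∨ δ = -1)
    (k : ℕ) (hk : Squarefree k) (hkdvd : k ∣ G.index) :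
    (G ⊓ (AddSubgroup.prod (AddSubgroup.zmultiples (k : ℤ))
        (AddSubgroup.zmultiples (k : ℤ)))).index = k * G.index := by
  change (G ⊓ scaledLattice k).index = _
  rw [← relIndex_mul_index (inf_le_left : G ⊓ scaledLattice k ≤ G), inf_relIndex_left,
    relIndex_scaledLattice_of_squarefree hG hprim hk hkdvd]
end

section
/- Let Δ ∈ ℤ[s,t] be a separable binary form of degree d ≥ 1 (no repeated roots in P¹ over ℂ) and let ℛ ⊂ ℝ² be a bounded set. Then there is a constant C, depending only on Δ and ℛ, such that for all real numbers B ≥ 2 and m ≥ 1: vol{(s,t) ∈ Bℛ : |Δ(s,t)| < m·B^{d/2}} ≤ C·m·B^{3/2}, where vol denotes Lebesgue measure and Bℛ = {Bx : x ∈ ℛ}. -/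
/-!
Since `Δ ≠ 0` is homogeneous, some direction `(1, l)` has `a := Δ(1, l) ≠ 0`. After the
shear `(s, u) ↦ (s, l s + u)`, every line `u = const` carries a polynomial in `s` of degree `d`
with leading coefficient `a`, and such a polynomial is smaller than `|a| r^d` only within
distance `r` of the real parts of its complex roots, a set of measure at most `2 d r`. In the
sheared coordinates `Bℛ` lies in a strip `|u| = O(B)`, and `r ≍ m B^{1/2}` makes
`|a| r^d ≥ m B^{d/2}`, so Fubini gives the bound `O(B) · 2 d r = O(m B^{3/2})`.
-/

open MeasureTheory Metric
open scoped Polynomial Pointwise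

namespace Polynomial

variable {ι S : Type*} [CommSemiring S]

theorem natDegree_prod_pow_le (s : Finset ι) (f : ι → S[X]) (m : ι → ℕ) {n : ℕ}
    (hf : ∀ i ∈ s, (f i).natDegree ≤ n) :
    (∏ i ∈ s, f i ^ m i).natDegree ≤ (∑ i ∈ s, m i) * n :=
  (natDegree_prod_le s _).trans <| (Finset.sum_mul s m n).symm ▸
    Finset.sum_le_sum fun i hi => natDegree_pow_le_of_le _ (hf i hi)

theorem coeff_prod_pow_of_natDegree_le (s : Finset ι) (f : ι → S[X]) (m : ι → ℕ) {n : ℕ}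
    (hf : ∀ i ∈ s, (f i).natDegree ≤ n) :
    (∏ i ∈ s, f i ^ m i).coeff ((∑ i ∈ s, m i) * n) = ∏ i ∈ s, (f i).coeff n ^ m i := by
  classical
  induction s using Finset.induction_on with
  | empty => simp
  | insert a s ha ih =>
    have hfa := hf a (Finset.mem_insert_self a s)
    have hfs : ∀ i ∈ s, (f i).natDegree ≤ n := fun i hi => hf i (Finset.mem_insert_of_mem hi)
    rw [Finset.prod_insert ha, Finset.sum_insert ha, Finset.prod_insert ha, add_mul,
      coeff_mul_add_eq_of_natDegree_le (natDegree_pow_le_of_le _ hfa)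
        (natDegree_prod_pow_le s f m hfs), coeff_pow_of_natDegree_le hfa, ih hfs]

theorem abs_leadingCoeff_mul_pow_le_abs_eval {p : ℝ[X]} {r x : ℝ} (hr : 0 ≤ r)
    (hx : ∀ z ∈ (p.map (algebraMap ℝ ℂ)).roots, r ≤ |x - z.re|) :
    |p.leadingCoeff| * r ^ p.natDegree ≤ |p.eval x| := by
  set P := p.map (algebraMap ℝ ℂ)
  have hsplits : P.Splits := IsAlgClosed.splits P
  have hcard : Multiset.card P.roots = p.natDegree := by
    rw [← natDegree_map (algebraMap ℝ ℂ), splits_iff_card_roots.mp hsplits]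
  have hnorm : |p.eval x| = |p.leadingCoeff| * (P.roots.map fun z => ‖(x : ℂ) - z‖).prod := by
    have := congrArg norm (hsplits.eval_eq_prod_roots (x : ℂ))
    rw [eval_map_algebraMap, ← Complex.coe_algebraMap, aeval_algebraMap_apply_eq_algebraMap_eval,
      norm_mul, leadingCoeff_map, ← normHom_apply (Multiset.prod _), map_multiset_prod,
      Multiset.map_map] at this
    simpa using this
  rw [hnorm, ← hcard, ← Multiset.prod_replicate, ← Multiset.map_const']
  gcongr
  exact Multiset.prod_map_le_prod_map₀ _ _ (fun _ _ => hr) fun z hz =>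
    (hx z hz).trans <| by simpa using Complex.abs_re_le_norm ((x : ℂ) - z)

theorem volume_setOf_abs_eval_lt_le {p : ℝ[X]} {d : ℕ} (hp : p.natDegree ≤ d) {r : ℝ}
    (hr : 0 ≤ r) :
    volume {x | |p.eval x| < |p.coeff d| * r ^ d} ≤ d * ENNReal.ofReal (2 * r) := by
  by_cases hd : p.coeff d = 0
  · simp [hd, (abs_nonneg _).not_gt]
  have hnat : p.natDegree = d := natDegree_eq_of_le_of_coeff_ne_zero hp hd
  set roots := (p.map (algebraMap ℝ ℂ)).roots
  have hcover : {x | |p.eval x| < |p.coeff d| * r ^ d} ⊆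
      ⋃ z ∈ roots.toFinset, closedBall z.re r := by
    intro x hx
    by_contra hfar
    simp only [Set.mem_iUnion, Multiset.mem_toFinset, mem_closedBall, Real.dist_eq, not_exists,
      not_le] at hfar
    have := abs_leadingCoeff_mul_pow_le_abs_eval hr fun z hz => (hfar z hz).le
    rw [hnat, leadingCoeff, hnat] at this
    exact (not_lt.mpr this) hx
  have hcard : roots.toFinset.card ≤ d :=
    (Multiset.toFinset_card_le _).trans <| (card_roots' _).trans (natDegree_map_le.trans hp)
  calc volume {x | |p.eval x| < |p.coeff d| * r ^ d}
      ≤ ∑ z ∈ roots.toFinset, volume (closedBall z.re r) :=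
        (measure_mono hcover).trans (measure_biUnion_finset_le _ _)
    _ = roots.toFinset.card * ENNReal.ofReal (2 * r) := by simp [Real.volume_closedBall]
    _ ≤ d * ENNReal.ofReal (2 * r) := by gcongr

end Polynomial

namespace MvPolynomial

variable {σ R S : Type*} [Fintype σ] [CommSemiring R] [CommSemiring S] [Algebra R S]
  {φ : MvPolynomial σ R} {d : ℕ}

theorem IsHomogeneous.sum_eq_of_mem_support (hφ : φ.IsHomogeneous d) {m : σ →₀ ℕ}
    (hm : m ∈ φ.support) : ∑ i, m i = d := by
  rw [← Finsupp.degree_eq_sum, Finsupp.degree_eq_weight_one]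
  exact hφ (mem_support_iff.mp hm)

theorem IsHomogeneous.aeval_smul (hφ : φ.IsHomogeneous d) (c : S) (x : σ → S) :
    MvPolynomial.aeval (c • x) φ = c ^ d * MvPolynomial.aeval x φ := by
  simp only [aeval_eq_eval₂Hom, coe_eval₂Hom, eval₂_eq', Finset.mul_sum]
  refine Finset.sum_congr rfl fun m hm => ?_
  simp only [Pi.smul_apply, smul_eq_mul, mul_pow, Finset.prod_mul_distrib,
    Finset.prod_pow_eq_pow_sum, hφ.sum_eq_of_mem_support hm]
  ring

theorem IsHomogeneous.natDegree_aeval_le (hφ : φ.IsHomogeneous d) {n : ℕ} (f : σ → S[X])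
    (hf : ∀ i, (f i).natDegree ≤ n) : (MvPolynomial.aeval f φ).natDegree ≤ d * n := by
  rw [aeval_eq_eval₂Hom, coe_eval₂Hom, eval₂_eq']
  refine Polynomial.natDegree_sum_le_of_forall_le _ _ fun m hm => ?_
  rw [Polynomial.algebraMap_apply, ← hφ.sum_eq_of_mem_support hm]
  exact (Polynomial.natDegree_C_mul_le _ _).trans <|
    Polynomial.natDegree_prod_pow_le _ _ _ fun i _ => hf i

theorem IsHomogeneous.coeff_aeval (hφ : φ.IsHomogeneous d) {n : ℕ} (f : σ → S[X])
    (hf : ∀ i, (f i).natDegree ≤ n) :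
    (MvPolynomial.aeval f φ).coeff (d * n) = MvPolynomial.aeval (fun i => (f i).coeff n) φ := by
  simp only [aeval_eq_eval₂Hom, coe_eval₂Hom, eval₂_eq', Polynomial.finsetSum_coeff]
  refine Finset.sum_congr rfl fun m hm => ?_
  rw [Polynomial.algebraMap_apply, Polynomial.coeff_C_mul, ← hφ.sum_eq_of_mem_support hm,
    Polynomial.coeff_prod_pow_of_natDegree_le _ _ _ fun i _ => hf i]

theorem IsHomogeneous.exists_eval_one_ne_zero {K : Type*} [Field K] [Infinite K]
    {φ : MvPolynomial (Fin 2) K} (hφ : φ.IsHomogeneous d) (h0 : φ ≠ 0) :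
    ∃ l : K, eval ![1, l] φ ≠ 0 := by
  obtain ⟨x, hx⟩ : ∃ x, eval x (X 0 * φ) ≠ 0 := by
    by_contra! h
    exact mul_ne_zero (X_ne_zero 0) h0 (MvPolynomial.funext fun x => by simpa using h x)
  rw [eval_mul, eval_X] at hx
  have hx0 : x 0 ≠ 0 := left_ne_zero_of_mul hx
  refine ⟨x 1 / x 0, fun h => right_ne_zero_of_mul hx ?_⟩
  have hscale : x = x 0 • ![1, x 1 / x 0] := by
    ext i; fin_cases i <;> simp [mul_div_cancel₀ _ hx0]
  have := hφ.aeval_smul (x 0) ![1, x 1 / x 0]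
  simp only [aeval_eq_eval] at this
  rw [hscale, this, h, mul_zero]

end MvPolynomial

theorem measurePreserving_shear (l : ℝ) :
    MeasurePreserving (fun x : ℝ × ℝ => (x.1, x.2 + l * x.1)) := by
  rw [Measure.volume_eq_prod]
  exact (MeasurePreserving.id volume).skew_product (by fun_prop) <|
    Filter.Eventually.of_forall fun s => (measurePreserving_add_right volume (l * s)).map_eq

section Shear

open MvPolynomial

variable {φ : MvPolynomial (Fin 2) ℝ} {d : ℕ}

theorem volume_setOf_abs_eval_shear_lt_le (hφ : φ.IsHomogeneous d) (l u : ℝ) {r : ℝ}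
    (hr : 0 ≤ r) :
    volume {s : ℝ | |eval ![s, l * s + u] φ| < |eval ![1, l] φ| * r ^ d} ≤
      d * ENNReal.ofReal (2 * r) := by
  set f : Fin 2 → ℝ[X] := ![Polynomial.X, Polynomial.C l * Polynomial.X + Polynomial.C u]
  have hf : ∀ i, (f i).natDegree ≤ 1 := by
    intro i; fin_cases i
    · exact Polynomial.natDegree_X_le
    · exact Polynomial.natDegree_linear_le
  have heval : ∀ s, (aeval f φ).eval s = eval ![s, l * s + u] φ := by
    intro s
    rw [aeval_eq_eval₂Hom, coe_eval₂Hom, polynomial_eval_eval₂,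
      show (Polynomial.evalRingHom s).comp (algebraMap ℝ ℝ[X]) = RingHom.id ℝ by ext; simp]
    congr 1
    ext i; fin_cases i <;> simp [f]
  have hcoeff : (aeval f φ).coeff d = eval ![1, l] φ := by
    rw [← mul_one d, hφ.coeff_aeval f hf, aeval_eq_eval,
      show (fun i => (f i).coeff 1) = ![1, l] by ext i; fin_cases i <;> simp [f]]
  simpa only [mul_one, heval, hcoeff] using
    Polynomial.volume_setOf_abs_eval_lt_le (hφ.natDegree_aeval_le f hf) hr

theorem volume_setOf_abs_eval_lt_le_of_strip (hφ : φ.IsHomogeneous d) (l M : ℝ) {r : ℝ}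
    (hr : 0 ≤ r) :
    volume {x : ℝ × ℝ | |x.2 - l * x.1| ≤ M ∧
        |eval ![x.1, x.2] φ| < |eval ![1, l] φ| * r ^ d} ≤
      ENNReal.ofReal (2 * M) * (d * ENNReal.ofReal (2 * r)) := by
  set c := |eval ![1, l] φ| * r ^ d
  set E := {y : ℝ × ℝ | |y.2| ≤ M ∧ |eval ![y.1, l * y.1 + y.2] φ| < c}
  have hE : MeasurableSet E := by
    have : Continuous fun y : ℝ × ℝ => eval ![y.1, l * y.1 + y.2] φ :=
      (continuous_eval φ).comp (by fun_prop)
    exact (measurableSet_le continuous_snd.abs.measurable measurable_const).inter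
      (measurableSet_lt this.abs.measurable measurable_const)
  have hpre : {x : ℝ × ℝ | |x.2 - l * x.1| ≤ M ∧ |eval ![x.1, x.2] φ| < c} =
      (fun x : ℝ × ℝ => (x.1, x.2 + -l * x.1)) ⁻¹' E := by
    ext x
    simp only [E, Set.mem_ofPred_eq, Set.mem_preimage]
    rw [show x.2 + -l * x.1 = x.2 - l * x.1 by ring, show l * x.1 + (x.2 - l * x.1) = x.2 by ring]
  have hslice : ∀ u, volume ((fun s => (s, u)) ⁻¹' E) ≤
      (Set.Icc (-M) M).indicator (fun _ => d * ENNReal.ofReal (2 * r)) u := by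
    intro u
    by_cases hu : u ∈ Set.Icc (-M) M
    · rw [Set.indicator_of_mem hu]
      exact (measure_mono fun s hs => hs.2).trans (volume_setOf_abs_eval_shear_lt_le hφ l u hr)
    · have : (fun s => (s, u)) ⁻¹' E = ∅ :=
        Set.eq_empty_of_forall_notMem fun s hs => hu (abs_le.mp hs.1)
      simp [this]
  calc volume {x : ℝ × ℝ | |x.2 - l * x.1| ≤ M ∧ |eval ![x.1, x.2] φ| < c}
      = volume E := by
        rw [hpre, (measurePreserving_shear (-l)).measure_preimage hE.nullMeasurableSet]
    _ = ∫⁻ u, volume ((fun s => (s, u)) ⁻¹' E) := by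
        rw [Measure.volume_eq_prod, Measure.prod_apply_symm hE]
    _ ≤ ∫⁻ u, (Set.Icc (-M) M).indicator (fun _ => d * ENNReal.ofReal (2 * r)) u :=
        lintegral_mono hslice
    _ = ENNReal.ofReal (2 * M) * (d * ENNReal.ofReal (2 * r)) := by
        rw [lintegral_indicator_const measurableSet_Icc, Real.volume_Icc, mul_comm]
        ring_nf

end Shear

theorem abs_snd_sub_mul_fst_le {x : ℝ × ℝ} {R : ℝ} (hx : ‖x‖ ≤ R) (l : ℝ) :
    |x.2 - l * x.1| ≤ (1 + |l|) * R := by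
  have h1 : |x.1| ≤ R := (norm_fst_le x).trans hx
  have h2 : |x.2| ≤ R := (norm_snd_le x).trans hx
  calc |x.2 - l * x.1| ≤ |x.2| + |l| * |x.1| := (abs_sub _ _).trans_eq (by rw [abs_mul])
    _ ≤ R + |l| * R := by gcongr
    _ = (1 + |l|) * R := by ring

theorem mul_rpow_le_abs_mul_pow {a m B : ℝ} (ha : a ≠ 0) (hm : 1 ≤ m) (hB : 0 ≤ B) {d : ℕ}
    (hd : d ≠ 0) :
    m * B ^ ((d : ℝ) / 2) ≤ |a| * (m * B ^ ((1 : ℝ) / 2) * max 1 |a|⁻¹) ^ d := by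
  have hρ : 1 ≤ |a| * max 1 |a|⁻¹ ^ d := calc
    1 = |a| * |a|⁻¹ := (mul_inv_cancel₀ (abs_ne_zero.mpr ha)).symm
    _ ≤ |a| * max 1 |a|⁻¹ := by gcongr; exact le_max_right _ _
    _ ≤ |a| * max 1 |a|⁻¹ ^ d := by gcongr; exact le_self_pow₀ (le_max_left _ _) hd
  have hB' : (B ^ ((1 : ℝ) / 2)) ^ d = B ^ ((d : ℝ) / 2) := by
    rw [← Real.rpow_mul_natCast hB]; ring_nf
  calc m * B ^ ((d : ℝ) / 2) ≤ m ^ d * B ^ ((d : ℝ) / 2) * (|a| * max 1 |a|⁻¹ ^ d) := by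
        rw [← mul_one (m * _)]
        gcongr
        exact le_self_pow₀ hm hd
    _ = |a| * (m * B ^ ((1 : ℝ) / 2) * max 1 |a|⁻¹) ^ d := by rw [← hB']; ring

/-- For a separable binary form `Δ` of degree `d ≥ 1` and a bounded
region `ℛ ⊂ ℝ²`, the volume of the subset of `Bℛ` where `|Δ(s,t)| < m·B^{d/2}` is
at most `C·m·B^{3/2}` for all `B ≥ 2`, `m ≥ 1`. -/
theorem volume_small_form_values (Δ : MvPolynomial (Fin 2) ℤ) (d : ℕ) (hd : 1 ≤ d)
    (hhom : Δ.IsHomogeneous d)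
    (hsep : Squarefree (MvPolynomial.map (Int.castRingHom ℚ) Δ))
    (ℛ : Set (ℝ × ℝ)) (hℛ : Bornology.IsBounded ℛ) :
    ∃ C : ℝ, 0 < C ∧ ∀ B m : ℝ, 2 ≤ B → 1 ≤ m →
      MeasureTheory.volume {x : ℝ × ℝ | x ∈ B • ℛ ∧
          |(MvPolynomial.aeval ![x.1, x.2] Δ : ℝ)| < m * B ^ ((d : ℝ) / 2)}
        ≤ ENNReal.ofReal (C * m * B ^ ((3 : ℝ) / 2)) := by
  have hΔ : Δ ≠ 0 := by rintro rfl; exact hsep.ne_zero (map_zero _)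
  set Δℝ := MvPolynomial.map (Int.castRingHom ℝ) Δ
  have hΔℝ : Δℝ ≠ 0 := fun h =>
    hΔ <| MvPolynomial.map_injective _ (Int.castRingHom ℝ).injective_int (by rw [map_zero]; exact h)
  obtain ⟨l, hl⟩ := (hhom.map _).exists_eval_one_ne_zero hΔℝ
  obtain ⟨K, hK, hℛK⟩ := hℛ.subset_closedBall_lt 0 0
  set a := MvPolynomial.eval ![1, l] Δℝ
  refine ⟨4 * d * (1 + |l|) * K * max 1 |a|⁻¹, by positivity, fun B m hB2 hm => ?_⟩
  have hB : 0 ≤ B := by linarith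
  let r := m * B ^ ((1 : ℝ) / 2) * max 1 |a|⁻¹
  calc volume {x : ℝ × ℝ | x ∈ B • ℛ ∧
          |(MvPolynomial.aeval ![x.1, x.2] Δ : ℝ)| < m * B ^ ((d : ℝ) / 2)}
      ≤ volume {x : ℝ × ℝ | |x.2 - l * x.1| ≤ (1 + |l|) * (B * K) ∧
          |MvPolynomial.eval ![x.1, x.2] Δℝ| < |a| * r ^ d} := by
        refine measure_mono fun x ⟨hxℛ, hxΔ⟩ => ⟨abs_snd_sub_mul_fst_le ?_ l, ?_⟩
        · have := Set.smul_set_mono hℛK hxℛ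
          rwa [smul_closedBall _ _ hK.le, smul_zero, mem_closedBall_zero_iff,
            Real.norm_of_nonneg hB] at this
        · rw [MvPolynomial.aeval_def, MvPolynomial.eval₂_eq_eval_map] at hxΔ
          exact hxΔ.trans_le (mul_rpow_le_abs_mul_pow hl (by linarith) hB (by omega))
    _ ≤ ENNReal.ofReal (2 * ((1 + |l|) * (B * K))) * (d * ENNReal.ofReal (2 * r)) :=
        volume_setOf_abs_eval_lt_le_of_strip (hhom.map _) l _ (by positivity)
    _ = ENNReal.ofReal (4 * d * (1 + |l|) * K * max 1 |a|⁻¹ * m * B ^ ((3 : ℝ) / 2)) := by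
        rw [← ENNReal.ofReal_natCast, ← ENNReal.ofReal_mul (by positivity),
          ← ENNReal.ofReal_mul (by positivity), show (3 : ℝ) / 2 = 1 / 2 + 1 by norm_num,
          Real.rpow_add_one' hB (by norm_num)]
        congr 1
        ring
end
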